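/- Let 0 < s < 1. There exists a constant C > 0 (depending only on s) such that for every λ ∈ ℝ and every σ > 0, one has ∫_ℝ |λ + u|^{-s} dγ_{0,σ²}(u) ≤ C σ^{-s}, where γ_{0,σ²} denotes the centered Gaussian probability measure on ℝ with variance σ². -/

import Mathlib

/-!
Split the integrand at `|λ + u| = σ`. Where `|λ + u| > σ` it is at most `σ^{-s}`, which the
probability measure integrates to `σ^{-s}`. On the window `|λ + u| ≤ σ` the Gaussian density is
at most `σ⁻¹`, so that part is at most `σ⁻¹ ∫_{-σ}^{σ} |t|^{-s} dt = σ⁻¹ · 2σ^{1-s}/(1-s)`,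
which is finite because `s < 1`. Both parts scale like `σ^{-s}`, whatever the shift `λ`.
-/

open MeasureTheory ProbabilityTheory Set Real
open scoped ENNReal NNReal

lemma lintegral_comp_abs_le (g : ℝ → ℝ≥0∞) (hg : Measurable g) :
    ∫⁻ x, g |x| ≤ 2 * ∫⁻ x, g x := by
  have hpt : ∀ x : ℝ, g |x| ≤ g x + g (-x) := by
    intro x
    rcases le_total 0 x with hx | hx
    · rw [abs_of_nonneg hx]; exact le_self_add
    · rw [abs_of_nonpos hx]; exact le_add_self
  calc ∫⁻ x, g |x| ≤ ∫⁻ x, (g x + g (-x)) := lintegral_mono hpt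
    _ = 2 * ∫⁻ x, g x := by
      rw [lintegral_add_left hg, lintegral_neg_eq_self g, two_mul]

lemma lintegral_Ioc_rpow_neg {s r : ℝ} (hs : s < 1) (hr : 0 ≤ r) :
    ∫⁻ x in Ioc 0 r, ENNReal.ofReal (x ^ (-s)) = ENNReal.ofReal (r ^ (1 - s) / (1 - s)) := by
  have hs' : -1 < -s := by linarith
  rw [← ofReal_integral_eq_lintegral_ofReal
      ((intervalIntegrable_iff_integrableOn_Ioc_of_le hr).1
        (intervalIntegral.intervalIntegrable_rpow' hs'))
      ((ae_restrict_iff' measurableSet_Ioc).2 (.of_forall fun x hx => rpow_nonneg hx.1.le _)),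
    ← intervalIntegral.integral_of_le hr, integral_rpow (.inl hs'),
    zero_rpow (by linarith), sub_zero, neg_add_eq_sub]

lemma gaussianPDFReal_le (m : ℝ) (v : ℝ≥0) (x : ℝ) :
    gaussianPDFReal m v x ≤ (√(2 * π * v))⁻¹ := by
  rw [gaussianPDFReal_def]
  refine mul_le_of_le_one_right (by positivity) (exp_le_one_iff.2 ?_)
  exact div_nonpos_of_nonpos_of_nonneg (neg_nonpos.2 (sq_nonneg _)) (by positivity)

lemma gaussianReal_le_smul_volume (m : ℝ) {v : ℝ≥0} (hv : v ≠ 0) :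
    gaussianReal m v ≤ ENNReal.ofReal (√(2 * π * v))⁻¹ • volume := by
  rw [gaussianReal_of_var_ne_zero m hv, ← withDensity_const]
  exact withDensity_mono
    (.of_forall fun x => ENNReal.ofReal_le_ofReal (gaussianPDFReal_le m v x))

lemma lintegral_abs_add_rpow_neg_le {μ : Measure ℝ} [IsProbabilityMeasure μ] {M : ℝ≥0∞}
    (hμ : μ ≤ M • volume) {s r : ℝ} (hs : s ∈ Ioo 0 1) (hr : 0 < r) (a : ℝ) :
    ∫⁻ u, ENNReal.ofReal (|a + u| ^ (-s)) ∂μ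
      ≤ ENNReal.ofReal (r ^ (-s)) + M * (2 * ENNReal.ofReal (r ^ (1 - s) / (1 - s))) := by
  set g : ℝ → ℝ≥0∞ := (Ioc 0 r).indicator fun x => ENNReal.ofReal (x ^ (-s))
  have hg : Measurable g := by
    refine Measurable.indicator ?_ measurableSet_Ioc
    fun_prop
  have hpt : ∀ x : ℝ, ENNReal.ofReal (|x| ^ (-s)) ≤ ENNReal.ofReal (r ^ (-s)) + g |x| := by
    intro x
    rcases eq_or_ne x 0 with rfl | hx
    · simp [zero_rpow (neg_ne_zero.2 hs.1.ne')]
    rcases le_or_gt |x| r with hxr | hxr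
    · simp [g, Set.indicator_of_mem (show |x| ∈ Ioc 0 r from ⟨abs_pos.2 hx, hxr⟩)]
    · exact le_add_right (ENNReal.ofReal_le_ofReal
        (rpow_le_rpow_of_nonpos hr hxr.le (neg_nonpos.2 hs.1.le)))
  calc ∫⁻ u, ENNReal.ofReal (|a + u| ^ (-s)) ∂μ
      ≤ ∫⁻ u, (ENNReal.ofReal (r ^ (-s)) + g |a + u|) ∂μ := lintegral_mono fun u => hpt _
    _ = ENNReal.ofReal (r ^ (-s)) + ∫⁻ u, g |a + u| ∂μ := by
      rw [lintegral_add_left measurable_const, lintegral_const, measure_univ, mul_one]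
    _ ≤ ENNReal.ofReal (r ^ (-s)) + M * ∫⁻ u, g |a + u| := by
      gcongr
      exact (lintegral_mono' hμ le_rfl).trans_eq (lintegral_smul_measure _ _)
    _ ≤ ENNReal.ofReal (r ^ (-s)) + M * (2 * ENNReal.ofReal (r ^ (1 - s) / (1 - s))) := by
      rw [lintegral_add_left_eq_self (fun x => g |x|) a, ← lintegral_Ioc_rpow_neg hs.2 hr.le,
        ← lintegral_indicator measurableSet_Ioc]
      gcongr
      exact lintegral_comp_abs_le g hg

lemma integral_abs_add_rpow_neg_le {μ : Measure ℝ} [IsProbabilityMeasure μ] {M : ℝ}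
    (hM : 0 ≤ M) (hμ : μ ≤ ENNReal.ofReal M • volume) {s r : ℝ} (hs : s ∈ Ioo 0 1) (hr : 0 < r)
    (a : ℝ) :
    ∫ u, |a + u| ^ (-s) ∂μ ≤ r ^ (-s) + M * (2 * (r ^ (1 - s) / (1 - s))) := by
  have h1s : 0 < 1 - s := sub_pos.2 hs.2
  rw [integral_eq_lintegral_of_nonneg_ae (.of_forall fun u => rpow_nonneg (abs_nonneg _) _)
    (by fun_prop : Measurable fun u => |a + u| ^ (-s)).aestronglyMeasurable]
  refine ENNReal.toReal_le_of_le_ofReal (by positivity) ?_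
  calc ∫⁻ u, ENNReal.ofReal (|a + u| ^ (-s)) ∂μ
      ≤ ENNReal.ofReal (r ^ (-s))
          + ENNReal.ofReal M * (2 * ENNReal.ofReal (r ^ (1 - s) / (1 - s))) :=
        lintegral_abs_add_rpow_neg_le hμ hs hr a
    _ = _ := by
      rw [← ENNReal.ofReal_ofNat, ← ENNReal.ofReal_mul zero_le_two, ← ENNReal.ofReal_mul hM,
        ← ENNReal.ofReal_add (by positivity) (by positivity)]

/-- Uniform negative-moment bound for a shifted centered Gaussian:
`∫ |λ + u|^{-s} dγ_{0,σ²}(u) ≤ C σ^{-s}` for `0 < s < 1`. -/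
theorem stmt2 (s : ℝ) (hs : s ∈ Set.Ioo (0 : ℝ) 1) :
    ∃ C > (0 : ℝ), ∀ (lam σ : ℝ), 0 < σ →
      ∫ u, |lam + u| ^ (-s) ∂(gaussianReal 0 (σ ^ 2).toNNReal) ≤ C * σ ^ (-s) := by
  have h1s : 0 < 1 - s := sub_pos.2 hs.2
  refine ⟨1 + 2 / (1 - s), by positivity, fun lam σ hσ => ?_⟩
  have hv : (σ ^ 2).toNNReal ≠ 0 := (Real.toNNReal_pos.2 (by positivity)).ne'
  have hdensity : (√(2 * π * (σ ^ 2).toNNReal))⁻¹ ≤ σ⁻¹ := by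
    rw [Real.coe_toNNReal _ (sq_nonneg σ), sqrt_mul' _ (sq_nonneg σ), sqrt_sq hσ.le]
    refine inv_anti₀ hσ (le_mul_of_one_le_left hσ.le ?_)
    exact one_le_sqrt.2 (by nlinarith [pi_gt_three])
  calc ∫ u, |lam + u| ^ (-s) ∂(gaussianReal 0 (σ ^ 2).toNNReal)
      ≤ σ ^ (-s) + (√(2 * π * (σ ^ 2).toNNReal))⁻¹ * (2 * (σ ^ (1 - s) / (1 - s))) :=
        integral_abs_add_rpow_neg_le (by positivity) (gaussianReal_le_smul_volume 0 hv) hs hσ lam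
    _ ≤ σ ^ (-s) + σ⁻¹ * (2 * (σ ^ (1 - s) / (1 - s))) := by gcongr
    _ = (1 + 2 / (1 - s)) * σ ^ (-s) := by
      rw [show σ ^ (1 - s) = σ * σ ^ (-s) by rw [sub_eq_add_neg, rpow_add hσ, rpow_one]]
      field_simp
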